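/- Given staircase data with associated Ferrers configuration X, let G be any finite set of nonzero bihomogeneous polynomials minimally generating I_X. Then G consists of exactly r+1 elements and there is a bijection σ : G → {0,1,…,r} together with nonzero scalars c_g ∈ ℂ∖{0} such that g = c_g · f_{σ(g)} for every g ∈ G; that is, the minimal bihomogeneous generating set of I_X is unique up to nonzero scalar multiples. -/

import Mathlib

/- Common setup: R = ℂ[x₀,x₁,y₀,y₁] as MvPolynomial (Fin 4) ℂ with
   x₀ = X 0, x₁ = X 1, y₀ = X 2, y₁ = X 3.
   `Hf a` is the horizontal form a₁x₀ - a₀x₁ of the point a = [a₀:a₁] ∈ ℙ¹;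
   `Vf b` is the vertical form b₁y₀ - b₀y₁;
   `cross a b ≠ 0` says the (nonzero) pairs a, b are non-proportional,
   i.e. define distinct points of ℙ¹. -/

open MvPolynomial

noncomputable section

abbrev R : Type := MvPolynomial (Fin 4) ℂ

def Hf (a : ℂ × ℂ) : R := C a.2 * X 0 - C a.1 * X 1

def Vf (b : ℂ × ℂ) : R := C b.2 * X 2 - C b.1 * X 3

def cross (a b : ℂ × ℂ) : ℂ := a.1 * b.2 - a.2 * b.1

/-- The defining ideal of the point P = A×B of ℙ¹×ℙ¹. -/
def Ipt (P : (ℂ × ℂ) × (ℂ × ℂ)) : Ideal R := Ideal.span {Hf P.1, Vf P.2}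

/-- The defining ideal of a finite set of points (I_∅ = R = ⊤). -/
def Ipts (X : Finset ((ℂ × ℂ) × (ℂ × ℂ))) : Ideal R := X.inf Ipt

/-- The defining ideal of a set of points (I_∅ = R = ⊤). -/
def IptsSet (W : Set ((ℂ × ℂ) × (ℂ × ℂ))) : Ideal R := ⨅ P ∈ W, Ipt P

/-- Bihomogeneous: homogeneous separately in x₀,x₁ and in y₀,y₁. -/
def Bihom (f : R) : Prop :=
  ∃ a b : ℕ, IsWeightedHomogeneous (![1,1,0,0] : Fin 4 → ℕ) f a ∧
    IsWeightedHomogeneous (![0,0,1,1] : Fin 4 → ℕ) f b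

/-- `G` minimally generates `I`. -/
def MinGen (G : Finset R) (I : Ideal R) : Prop :=
  Ideal.span (G : Set R) = I ∧ ∀ g ∈ G, Ideal.span ((G : Set R) \ {g}) ≠ I

/-- Staircase data: r ≥ 1, 0 = t₀ < t₁ < ⋯ < t_r, 0 = s₀ < s₁ < ⋯ < s_r,
    pairwise distinct points A₁,…,A_{t_r} of ℙ¹ and pairwise distinct points
    B₁,…,B_{s_r} of ℙ¹ (all indexed starting at 1). -/
structure Staircase where
  r : ℕ
  t : ℕ → ℕ
  s : ℕ → ℕ
  A : ℕ → ℂ × ℂ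
  B : ℕ → ℂ × ℂ
  hr : 1 ≤ r
  ht0 : t 0 = 0
  hs0 : s 0 = 0
  ht : ∀ k, k < r → t k < t (k + 1)
  hs : ∀ k, k < r → s k < s (k + 1)
  hA0 : ∀ i ∈ Finset.Icc 1 (t r), A i ≠ 0
  hB0 : ∀ j ∈ Finset.Icc 1 (s r), B j ≠ 0
  hAd : ∀ i ∈ Finset.Icc 1 (t r), ∀ i' ∈ Finset.Icc 1 (t r), i ≠ i' → cross (A i) (A i') ≠ 0
  hBd : ∀ j ∈ Finset.Icc 1 (s r), ∀ j' ∈ Finset.Icc 1 (s r), j ≠ j' → cross (B j) (B j') ≠ 0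

/-- The staircase generator f_k = H₁⋯H_{t_k} · V₁⋯V_{s_{r-k}}. -/
def stairGen (S : Staircase) (k : ℕ) : R :=
  (∏ i ∈ Finset.Icc 1 (S.t k), Hf (S.A i)) * ∏ j ∈ Finset.Icc 1 (S.s (S.r - k)), Vf (S.B j)

/-!
The ideal `I_X` is generated by the staircase generators `f_k`. Sweep the columns from left to
right, keeping `f ≡ H₁⋯H_c · q` modulo `(f₀, …, f_r)` with `q` vanishing on the columns after `c`.
Projecting the `x`-plane onto the line `a = A_{c+1}` splits `q = H_a q' + ρ` with
`ρ(x, y) = q(H_e(x) a, y)`. Since `q` vanishes on `a × B_j` for the points of column `c + 1`, `ρ`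
vanishes on `ℙ¹ × B_j`, so it is divisible by the product of these `V_{B_j}` (distinct `V_B` are
non-associate primes) and `H₁⋯H_c ρ` is a multiple of some `f_k`; `q'` still vanishes on the
later columns because the point ideals are prime and do not contain `H_a`.

The bidegrees `(t_k, s_{r-k})` of the `f_k` form an antichain, so the part of `I_X` of bidegree
`(t_k, s_{r-k})` is `ℂ f_k`. Taking that component of an expression of `f_k` in a homogeneous
generating set `G` produces a generator of bidegree at most, hence equal to, that of `f_k`, i.e. a
nonzero multiple of `f_k`; minimality of `G` leaves no room for other elements.
-/

section GradedRing

open DirectSum SetLike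

variable {ι A σ : Type*} [DecidableEq ι] [AddCommMonoid ι] [PartialOrder ι]
  [CanonicallyOrderedAdd ι] [CommRing A] [SetLike σ A] [AddSubgroupClass σ A]
  {𝒜 : ι → σ} [GradedRing 𝒜]

theorem exists_mem_grade_le_of_mem_span {s : Set A} (hs : ∀ x ∈ s, IsHomogeneousElem 𝒜 x)
    {p : A} {n : ι} (hp : p ∈ Ideal.span s) (hpn : p ∈ 𝒜 n) (hp0 : p ≠ 0) :
    ∃ x ∈ s, ∃ i ≤ n, x ∈ 𝒜 i := by
  obtain ⟨m, c, x, rfl⟩ := Submodule.mem_span_set'.mp hp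
  by_contra! hfar
  apply hp0
  rw [← decompose_of_mem_same 𝒜 hpn, ← GradedRing.proj_apply, map_sum]
  refine Finset.sum_eq_zero fun j _ => ?_
  obtain ⟨i, hi⟩ := hs _ (x j).2
  exact coe_decompose_mul_of_right_mem_of_not_le 𝒜 hi fun hin => hfar _ (x j).2 i hin hi

variable [Sub ι] [OrderedSub ι] [AddLeftReflectLE ι]

theorem exists_mem_grade_zero_eq_mul_of_mem_span {s : Set A}
    (hs : ∀ x ∈ s, IsHomogeneousElem 𝒜 x) {x₀ : A} {d : ι} (hx₀ : x₀ ∈ 𝒜 d)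
    (hcorner : ∀ x ∈ s, ∀ i ≤ d, x ∈ 𝒜 i → x = x₀) {p : A} (hp : p ∈ Ideal.span s)
    (hpd : p ∈ 𝒜 d) : ∃ a ∈ 𝒜 0, p = a * x₀ := by
  classical
  obtain ⟨m, c, x, rfl⟩ := Submodule.mem_span_set'.mp hp
  have hterm : ∀ j, GradedRing.proj 𝒜 d (c j • (x j : A)) =
      (if (x j : A) = x₀ then GradedRing.proj 𝒜 0 (c j) else 0) * x₀ := by
    intro j
    rw [GradedRing.proj_apply, smul_eq_mul]
    split_ifs with hj
    · rw [hj, coe_decompose_mul_of_right_mem_of_le 𝒜 hx₀ le_rfl, tsub_self, GradedRing.proj_apply]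
    · obtain ⟨i, hi⟩ := hs _ (x j).2
      rw [zero_mul]
      exact coe_decompose_mul_of_right_mem_of_not_le 𝒜 hi fun hid => hj (hcorner _ (x j).2 i hid hi)
  refine ⟨∑ j, if (x j : A) = x₀ then GradedRing.proj 𝒜 0 (c j) else 0, ?_, ?_⟩
  · refine sum_mem fun j _ => ?_
    split_ifs
    · rw [GradedRing.proj_apply]; exact SetLike.coe_mem _
    · exact zero_mem _
  · rw [← decompose_of_mem_same 𝒜 hpd, ← GradedRing.proj_apply, map_sum, Finset.sum_mul]
    exact Finset.sum_congr rfl fun j _ => hterm j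

theorem exists_mem_eq_unit_mul_of_span_eq_span_range (h𝒜₀ : ∀ a ∈ 𝒜 0, a ≠ 0 → IsUnit a)
    {κ : Type*} {f : κ → A} {d : κ → ι} (hf : ∀ k, f k ∈ 𝒜 (d k)) (hf0 : ∀ k, f k ≠ 0)
    (hd : ∀ j k, d j ≤ d k → j = k) {G : Set A} (hG : ∀ g ∈ G, g ≠ 0 ∧ IsHomogeneousElem 𝒜 g)
    (hspan : Ideal.span G = Ideal.span (Set.range f)) (k : κ) :
    ∃ g ∈ G, ∃ a ∈ 𝒜 0, IsUnit a ∧ g = a * f k := by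
  have hrange : ∀ x ∈ Set.range f, IsHomogeneousElem 𝒜 x := by
    rintro _ ⟨k, rfl⟩
    exact ⟨d k, hf k⟩
  have hdeg : ∀ k i, f k ∈ 𝒜 i → i = d k := fun k i hi =>
    DirectSum.degree_eq_of_mem_mem 𝒜 hi (hf k) (hf0 k)
  obtain ⟨g, hgG, i, hik, hgi⟩ := exists_mem_grade_le_of_mem_span (fun g hg => (hG g hg).2)
    (hspan ▸ Ideal.subset_span ⟨k, rfl⟩) (hf k) (hf0 k)
  obtain ⟨_, ⟨j, rfl⟩, i', hi'i, hji'⟩ := exists_mem_grade_le_of_mem_span hrange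
    (hspan ▸ Ideal.subset_span hgG) hgi (hG g hgG).1
  obtain rfl : j = k := hd j k ((hdeg j i' hji').symm.le.trans (hi'i.trans hik))
  obtain rfl : i = d j := le_antisymm hik ((hdeg j i' hji').symm.le.trans hi'i)
  obtain ⟨a, ha, rfl⟩ := exists_mem_grade_zero_eq_mul_of_mem_span hrange (hf j)
    (by rintro _ ⟨k, rfl⟩ i hi hki; rw [hd k j ((hdeg k i hki).symm.le.trans hi)])
    (hspan ▸ Ideal.subset_span hgG) hgi
  exact ⟨_, hgG, a, ha, h𝒜₀ a ha (left_ne_zero_of_mul (hG _ hgG).1), rfl⟩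

theorem exists_equiv_eq_mul_of_minimal_homogeneous_generators
    (h𝒜₀ : ∀ a ∈ 𝒜 0, a ≠ 0 → IsUnit a) {κ : Type*} (f : κ → A) (d : κ → ι)
    (hf : ∀ k, f k ∈ 𝒜 (d k)) (hf0 : ∀ k, f k ≠ 0) (hd : ∀ j k, d j ≤ d k → j = k)
    (G : Finset A) (hG : ∀ g ∈ G, g ≠ 0 ∧ IsHomogeneousElem 𝒜 g)
    (hspan : Ideal.span (G : Set A) = Ideal.span (Set.range f))
    (hmin : ∀ g ∈ G, Ideal.span ((G : Set A) \ {g}) ≠ Ideal.span (Set.range f)) :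
    ∃ σ : {g // g ∈ G} ≃ κ, ∀ g : {g // g ∈ G}, ∃ a ∈ 𝒜 0, IsUnit a ∧ (g : A) = a * f (σ g) := by
  choose τ hτG a ha hunit hτ using
    exists_mem_eq_unit_mul_of_span_eq_span_range h𝒜₀ hf hf0 hd hG hspan
  have hinj : Function.Injective τ := fun j k hjk => by
    have hmem : ∀ k, τ k ∈ 𝒜 (d k) := fun k => by
      simpa [hτ k] using SetLike.GradedMul.mul_mem (ha k) (hf k)
    exact hd j k (DirectSum.degree_eq_of_mem_mem 𝒜 (hmem j) (hjk ▸ hmem k)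
      (hG _ (hτG j)).1).le
  have hsurj : ∀ g ∈ G, ∃ k, τ k = g := by
    intro g hg
    by_contra! hout
    refine hmin g hg (le_antisymm (hspan ▸ Ideal.span_mono Set.sdiff_subset) ?_)
    refine Ideal.span_le.mpr ?_
    rintro _ ⟨k, rfl⟩
    have : f k = ↑(hunit k).unit⁻¹ * τ k := by
      rw [hτ k, ← mul_assoc, IsUnit.val_inv_mul, one_mul]
    rw [this]
    exact Ideal.mul_mem_left _ _ (Ideal.subset_span ⟨hτG k, hout k⟩)
  let e : κ ≃ {g // g ∈ G} := Equiv.ofBijective (fun k => ⟨τ k, hτG k⟩)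
    ⟨fun j k hjk => hinj (congrArg Subtype.val hjk),
      fun g => (hsurj g g.2).imp fun k hk => Subtype.ext hk⟩
  refine ⟨e.symm, fun g => ⟨a (e.symm g), ha _, hunit _, ?_⟩⟩
  conv_lhs => rw [← e.apply_symm_apply g]
  exact hτ _

end GradedRing

theorem MvPolynomial.sub_aeval_mem {σ S : Type*} [CommRing S] {J : Ideal (MvPolynomial σ S)}
    {v : σ → MvPolynomial σ S} (hv : ∀ i, X i - v i ∈ J) (f : MvPolynomial σ S) :
    f - aeval v f ∈ J := by
  have : (Ideal.Quotient.mkₐ S J).comp (aeval v) = Ideal.Quotient.mkₐ S J :=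
    algHom_ext fun i => by simpa [Ideal.Quotient.eq, sub_eq_neg_add] using J.neg_mem (hv i)
  exact Ideal.Quotient.eq.mp (congrArg (· f) this).symm

theorem exists_cross_eq_one {a : ℂ × ℂ} (ha : a ≠ 0) : ∃ e, cross a e = 1 := by
  by_cases h1 : a.1 = 0
  · have h2 : a.2 ≠ 0 := fun h2 => ha (Prod.ext h1 h2)
    exact ⟨(-a.2⁻¹, 0), by simp [cross, h2]⟩
  · exact ⟨(0, a.1⁻¹), by simp [cross, h1]⟩

theorem Hf_ne_zero {a : ℂ × ℂ} (ha : a ≠ 0) : Hf a ≠ 0 := by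
  obtain ⟨e, he⟩ := exists_cross_eq_one ha
  have heval : eval ![e.1, e.2, 0, 0] (Hf a) = -1 := by
    simp only [Hf, map_sub, map_mul, eval_C, eval_X, Matrix.cons_val_zero, Matrix.cons_val_one]
    rw [cross] at he
    linear_combination -he
  exact fun h => by simp [h] at heval

theorem Vf_ne_zero {b : ℂ × ℂ} (hb : b ≠ 0) : Vf b ≠ 0 := by
  obtain ⟨e, he⟩ := exists_cross_eq_one hb
  have heval : eval ![0, 0, e.1, e.2] (Vf b) = -1 := by
    simp only [Vf, map_sub, map_mul, eval_C, eval_X, Matrix.cons_val]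
    rw [cross] at he
    linear_combination -he
  exact fun h => by simp [h] at heval

/-- The substitution `x ↦ H_e(x) • a`; when `cross a e = 1` it is the projection of the
`x`-plane onto the line `ℂ a` along `ℂ e`. -/
def projX (a e : ℂ × ℂ) : R →ₐ[ℂ] R :=
  aeval ![C a.1 * Hf e, C a.2 * Hf e, X 2, X 3]

def projY (b e : ℂ × ℂ) : R →ₐ[ℂ] R :=
  aeval ![X 0, X 1, C b.1 * Vf e, C b.2 * Vf e]

theorem projX_Hf (a e a' : ℂ × ℂ) : projX a e (Hf a') = C (cross a a') * Hf e := by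
  simp only [projX, Hf, map_sub, map_mul, aeval_C, algebraMap_eq, aeval_X, Matrix.cons_val_zero,
    Matrix.cons_val_one, cross]
  ring

theorem projX_Vf (a e b : ℂ × ℂ) : projX a e (Vf b) = Vf b := by
  simp [projX, Vf, algebraMap_eq]

theorem projY_Vf (b e b' : ℂ × ℂ) : projY b e (Vf b') = C (cross b b') * Vf e := by
  simp only [projY, Vf, map_sub, map_mul, aeval_C, algebraMap_eq, aeval_X, Matrix.cons_val,
    cross]
  ring

theorem projY_Hf (b e a : ℂ × ℂ) : projY b e (Hf a) = Hf a := by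
  simp [projY, Hf, algebraMap_eq]

theorem C_cross_eq_one {a e : ℂ × ℂ} (he : cross a e = 1) :
    C a.1 * C e.2 - C a.2 * C e.1 = (1 : R) := by
  simpa [cross] using congrArg (C : ℂ → R) he

theorem sub_projX_mem {a e : ℂ × ℂ} (he : cross a e = 1) (f : R) :
    f - projX a e f ∈ Ideal.span {Hf a} := by
  refine sub_aeval_mem (fun i => Ideal.mem_span_singleton'.mpr ?_) f
  fin_cases i
  · refine ⟨C (-e.1), ?_⟩
    simp only [C_neg, Hf, neg_mul, Fin.zero_eta, Matrix.cons_val_zero]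
    linear_combination X 0 * C_cross_eq_one he
  · refine ⟨C (-e.2), ?_⟩
    simp only [C_neg, Hf, neg_mul, Fin.mk_one, Matrix.cons_val_one, Matrix.cons_val_zero]
    linear_combination X 1 * C_cross_eq_one he
  · exact ⟨0, by simp⟩
  · exact ⟨0, by simp⟩

theorem sub_projY_mem {b e : ℂ × ℂ} (he : cross b e = 1) (f : R) :
    f - projY b e f ∈ Ideal.span {Vf b} := by
  refine sub_aeval_mem (fun i => Ideal.mem_span_singleton'.mpr ?_) f
  fin_cases i
  · exact ⟨0, by simp⟩
  · exact ⟨0, by simp⟩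
  · refine ⟨C (-e.1), ?_⟩
    simp only [C_neg, Vf, neg_mul, Fin.reduceFinMk, Matrix.cons_val]
    linear_combination X 2 * C_cross_eq_one he
  · refine ⟨C (-e.2), ?_⟩
    simp only [C_neg, Vf, neg_mul, Fin.reduceFinMk, Matrix.cons_val]
    linear_combination X 3 * C_cross_eq_one he

theorem ne_zero_of_cross_eq_one {a e : ℂ × ℂ} (he : cross a e = 1) : e ≠ 0 := by
  rintro rfl
  simp [cross] at he

theorem ker_projY {b e : ℂ × ℂ} (he : cross b e = 1) :
    RingHom.ker (projY b e) = Ideal.span {Vf b} := by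
  refine le_antisymm (fun f hf => ?_) ?_
  · simpa [RingHom.mem_ker.mp hf] using sub_projY_mem he f
  · rw [Ideal.span_le, Set.singleton_subset_iff, SetLike.mem_coe, RingHom.mem_ker, projY_Vf]
    simp [cross, mul_comm]

theorem Vf_prime {b : ℂ × ℂ} (hb : b ≠ 0) : Prime (Vf b) := by
  obtain ⟨e, he⟩ := exists_cross_eq_one hb
  rw [← Ideal.span_singleton_prime (Vf_ne_zero hb), ← ker_projY he]
  exact RingHom.ker_isPrime _

theorem not_Vf_dvd_Vf {b b' : ℂ × ℂ} (hb : b ≠ 0) (h : cross b b' ≠ 0) : ¬ Vf b ∣ Vf b' := by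
  obtain ⟨e, he⟩ := exists_cross_eq_one hb
  rw [← Ideal.mem_span_singleton, ← ker_projY he, RingHom.mem_ker, projY_Vf]
  exact mul_ne_zero (C_ne_zero.mpr h) (Vf_ne_zero (ne_zero_of_cross_eq_one he))

theorem prod_Vf_dvd {s : Finset ℕ} {B : ℕ → ℂ × ℂ} (hB : ∀ j ∈ s, B j ≠ 0)
    (hBd : ∀ j ∈ s, ∀ j' ∈ s, j ≠ j' → cross (B j) (B j') ≠ 0) {p : R}
    (hp : ∀ j ∈ s, Vf (B j) ∣ p) : ∏ j ∈ s, Vf (B j) ∣ p :=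
  Finset.prod_dvd_of_isRelPrime (fun j hj j' hj' hne =>
    (Vf_prime (hB j hj)).irreducible.isRelPrime_iff_not_dvd.mpr
      (not_Vf_dvd_Vf (hB j hj) (hBd j hj j' hj' hne))) hp

theorem Hf_mem_Ipt (a b : ℂ × ℂ) : Hf a ∈ Ipt (a, b) :=
  Ideal.subset_span (by simp)

theorem Vf_mem_Ipt (a b : ℂ × ℂ) : Vf b ∈ Ipt (a, b) :=
  Ideal.subset_span (by simp)

theorem Ipt_eq_ker {a b e e' : ℂ × ℂ} (he : cross a e = 1) (he' : cross b e' = 1) :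
    Ipt (a, b) = RingHom.ker ((projX a e).comp (projY b e')) := by
  refine le_antisymm ?_ fun f hf => ?_
  · rw [Ipt, Ideal.span_le]
    rintro _ (rfl | rfl) <;> simp [projX_Hf, projY_Hf, projY_Vf, cross, mul_comm]
  · have hY : f - projY b e' f ∈ Ipt (a, b) :=
      Ideal.span_mono (by simp) (sub_projY_mem he' f)
    have hX : projY b e' f - projX a e (projY b e' f) ∈ Ipt (a, b) :=
      Ideal.span_mono (by simp) (sub_projX_mem he _)
    have h0 : projX a e (projY b e' f) = 0 := hf
    simpa [h0] using add_mem hY hX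

theorem Ipt_isPrime {a b : ℂ × ℂ} (ha : a ≠ 0) (hb : b ≠ 0) : (Ipt (a, b)).IsPrime := by
  obtain ⟨e, he⟩ := exists_cross_eq_one ha
  obtain ⟨e', he'⟩ := exists_cross_eq_one hb
  rw [Ipt_eq_ker he he']
  exact RingHom.ker_isPrime _

theorem Hf_notMem_Ipt {a a' b : ℂ × ℂ} (ha : a ≠ 0) (hb : b ≠ 0) (h : cross a a' ≠ 0) :
    Hf a' ∉ Ipt (a, b) := by
  obtain ⟨e, he⟩ := exists_cross_eq_one ha
  obtain ⟨e', he'⟩ := exists_cross_eq_one hb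
  rw [Ipt_eq_ker he he', RingHom.mem_ker, AlgHom.coe_comp, Function.comp_apply, projY_Hf,
    projX_Hf]
  exact mul_ne_zero (C_ne_zero.mpr h) (Hf_ne_zero (ne_zero_of_cross_eq_one he))

theorem Vf_dvd_projX_of_mem_Ipt {a b : ℂ × ℂ} (e : ℂ × ℂ) {f : R} (hf : f ∈ Ipt (a, b)) :
    Vf b ∣ projX a e f := by
  obtain ⟨p, q, rfl⟩ := Ideal.mem_span_pair.mp hf
  simp [projX_Hf, projX_Vf, cross, mul_comm]

namespace Staircase

variable (S : Staircase)

def hProd (m : ℕ) : R := ∏ i ∈ Finset.Icc 1 m, Hf (S.A i)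

def vProd (n : ℕ) : R := ∏ j ∈ Finset.Icc 1 n, Vf (S.B j)

theorem stairGen_eq (k : ℕ) : stairGen S k = S.hProd (S.t k) * S.vProd (S.s (S.r - k)) := rfl

def stairGens (k : Fin (S.r + 1)) : R := stairGen S k

def ferrersIdeal : Ideal R :=
  ⨅ k ∈ Finset.range S.r, ⨅ i ∈ Finset.Ioc (S.t k) (S.t (k + 1)),
    ⨅ j ∈ Finset.Icc 1 (S.s (S.r - k)), Ipt (S.A i, S.B j)

def VanishesBeyond (c : ℕ) (q : R) : Prop :=
  ∀ k < S.r, ∀ i ∈ Finset.Ioc (S.t k) (S.t (k + 1)), c < i →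
    ∀ j ∈ Finset.Icc 1 (S.s (S.r - k)), q ∈ Ipt (S.A i, S.B j)

theorem t_strictMonoOn : StrictMonoOn S.t (Set.Iic S.r) :=
  strictMonoOn_Iic_of_lt_succ fun k hk => by simpa using S.ht k hk

theorem s_strictMonoOn : StrictMonoOn S.s (Set.Iic S.r) :=
  strictMonoOn_Iic_of_lt_succ fun k hk => by simpa using S.hs k hk

theorem le_of_t_lt_t_succ {k k' : ℕ} (hk : k ≤ S.r) (hk' : k' < S.r)
    (h : S.t k < S.t (k' + 1)) : k ≤ k' :=
  Nat.lt_succ_iff.mp ((S.t_strictMonoOn.lt_iff_lt hk (Nat.succ_le_of_lt hk')).mp h)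

theorem s_sub_le_s_sub {k k' : ℕ} (h : k ≤ k') : S.s (S.r - k') ≤ S.s (S.r - k) :=
  S.s_strictMonoOn.monotoneOn (Set.mem_Iic.mpr (Nat.sub_le _ _))
    (Set.mem_Iic.mpr (Nat.sub_le _ _)) (Nat.sub_le_sub_left h _)

theorem exists_mem_Ioc_t {i : ℕ} (h0 : 0 < i) (hi : i ≤ S.t S.r) :
    ∃ k < S.r, i ∈ Finset.Ioc (S.t k) (S.t (k + 1)) := by
  suffices ∀ n, i ≤ S.t n → ∃ k < n, i ∈ Finset.Ioc (S.t k) (S.t (k + 1)) from this _ hi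
  intro n hn
  induction n with
  | zero => rw [S.ht0] at hn; omega
  | succ n ih =>
    by_cases hin : i ≤ S.t n
    · obtain ⟨k, hk, hki⟩ := ih hin
      exact ⟨k, by omega, hki⟩
    · exact ⟨n, by omega, Finset.mem_Ioc.mpr ⟨by omega, hn⟩⟩

theorem mem_ferrersIdeal_iff {f : R} : f ∈ S.ferrersIdeal ↔ S.VanishesBeyond 0 f := by
  simp only [ferrersIdeal, VanishesBeyond, Submodule.mem_iInf, Finset.mem_range]
  exact forall₂_congr fun k _ => forall₂_congr fun i hi =>
    ⟨fun h _ => h, fun h => h (Nat.zero_lt_of_lt (Finset.mem_Ioc.mp hi).1)⟩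

theorem stairGen_mem_ferrersIdeal {k : ℕ} (hk : k ≤ S.r) : stairGen S k ∈ S.ferrersIdeal := by
  rw [mem_ferrersIdeal_iff]
  intro k' hk' i hi _ j hj
  rw [Finset.mem_Ioc] at hi
  by_cases hik : i ≤ S.t k
  · refine Ideal.mem_of_dvd _ (Dvd.dvd.mul_right ?_ _) (Hf_mem_Ipt _ _)
    exact Finset.dvd_prod_of_mem _ (Finset.mem_Icc.mpr ⟨by omega, hik⟩)
  · have hkk' : k ≤ k' := S.le_of_t_lt_t_succ hk hk' (by omega)
    refine Ideal.mem_of_dvd _ (Dvd.dvd.mul_left ?_ _) (Vf_mem_Ipt _ _)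
    refine Finset.dvd_prod_of_mem _ (Finset.mem_Icc.mpr ⟨(Finset.mem_Icc.mp hj).1, ?_⟩)
    exact (Finset.mem_Icc.mp hj).2.trans (S.s_sub_le_s_sub hkk')

theorem hProd_mul_vProd_mem_span {k c n : ℕ} (hk : k ≤ S.r) (hc : S.t k ≤ c)
    (hn : S.s (S.r - k) ≤ n) : S.hProd c * S.vProd n ∈ Ideal.span (Set.range S.stairGens) := by
  have hdvd : stairGen S k ∣ S.hProd c * S.vProd n := by
    rw [stairGen_eq]
    exact mul_dvd_mul
      (Finset.prod_dvd_prod_of_subset _ _ _ (Finset.Icc_subset_Icc_right hc))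
      (Finset.prod_dvd_prod_of_subset _ _ _ (Finset.Icc_subset_Icc_right hn))
  exact Ideal.mem_of_dvd _ hdvd (Ideal.subset_span ⟨⟨k, Nat.lt_succ_of_le hk⟩, rfl⟩)

theorem mem_Icc_of_mem_Ioc_t {k i : ℕ} (hk : k < S.r) (hi : i ∈ Finset.Ioc (S.t k) (S.t (k + 1))) :
    i ∈ Finset.Icc 1 (S.t S.r) := by
  have : S.t (k + 1) ≤ S.t S.r := S.t_strictMonoOn.monotoneOn
    (Set.mem_Iic.mpr (Nat.succ_le_of_lt hk)) (Set.mem_Iic.mpr le_rfl) (Nat.succ_le_of_lt hk)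
  have := Finset.mem_Ioc.mp hi
  exact Finset.mem_Icc.mpr ⟨by omega, by omega⟩

theorem Icc_s_sub_subset (k : ℕ) : Finset.Icc 1 (S.s (S.r - k)) ⊆ Finset.Icc 1 (S.s S.r) :=
  Finset.Icc_subset_Icc_right (S.s_sub_le_s_sub (Nat.zero_le k))

theorem vanishesBeyond_succ_of_Hf_mul {c k : ℕ} (hk : k < S.r)
    (hck : c + 1 ∈ Finset.Ioc (S.t k) (S.t (k + 1))) {q q' ρ : R} (hq : S.VanishesBeyond c q)
    (hρ : S.vProd (S.s (S.r - k)) ∣ ρ) (hq' : Hf (S.A (c + 1)) * q' = q - ρ) :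
    S.VanishesBeyond (c + 1) q' := by
  intro k' hk' i hi hci j hj
  have hkk' : k ≤ k' := S.le_of_t_lt_t_succ hk.le hk'
    ((Finset.mem_Ioc.mp hck).1.trans_le (by have := (Finset.mem_Ioc.mp hi).2; omega))
  have hjk : j ∈ Finset.Icc 1 (S.s (S.r - k)) :=
    Finset.mem_Icc.mpr ⟨(Finset.mem_Icc.mp hj).1,
      (Finset.mem_Icc.mp hj).2.trans (S.s_sub_le_s_sub hkk')⟩
  have hAi := S.hA0 i (S.mem_Icc_of_mem_Ioc_t hk' hi)
  have hBj := S.hB0 j (S.Icc_s_sub_subset k hjk)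
  have hprod : Hf (S.A (c + 1)) * q' ∈ Ipt (S.A i, S.B j) := by
    rw [hq']
    exact sub_mem (hq k' hk' i hi (by omega) j hj)
      (Ideal.mem_of_dvd _ ((Finset.dvd_prod_of_mem _ hjk).trans hρ) (Vf_mem_Ipt _ _))
  exact ((Ipt_isPrime hAi hBj).mem_or_mem hprod).resolve_left (Hf_notMem_Ipt hAi hBj
    (S.hAd i (S.mem_Icc_of_mem_Ioc_t hk' hi) _ (S.mem_Icc_of_mem_Ioc_t hk hck) (by omega)))

theorem exists_vanishesBeyond_succ {c : ℕ} (hc : c < S.t S.r) {q : R}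
    (hq : S.VanishesBeyond c q) : ∃ q', S.VanishesBeyond (c + 1) q' ∧
      S.hProd c * q - S.hProd (c + 1) * q' ∈ Ideal.span (Set.range S.stairGens) := by
  obtain ⟨k, hk, hck⟩ := S.exists_mem_Ioc_t (Nat.succ_pos c) hc
  obtain ⟨e, he⟩ := exists_cross_eq_one (S.hA0 _ (S.mem_Icc_of_mem_Ioc_t hk hck))
  obtain ⟨q', hq'⟩ := Ideal.mem_span_singleton'.mp (sub_projX_mem he q)
  have hρ : S.vProd (S.s (S.r - k)) ∣ projX (S.A (c + 1)) e q :=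
    prod_Vf_dvd (fun j hj => S.hB0 j (S.Icc_s_sub_subset k hj))
      (fun j hj j' hj' => S.hBd j (S.Icc_s_sub_subset k hj) j' (S.Icc_s_sub_subset k hj'))
      (fun j hj => Vf_dvd_projX_of_mem_Ipt e (hq k hk _ hck (lt_add_one c) j hj))
  refine ⟨q', S.vanishesBeyond_succ_of_Hf_mul hk hck hq hρ (by rw [mul_comm, hq']), ?_⟩
  obtain ⟨w, hw⟩ := hρ
  have hsucc : S.hProd (c + 1) = S.hProd c * Hf (S.A (c + 1)) :=
    Finset.prod_Icc_succ_top (by omega) _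
  have hsplit : S.hProd c * q - S.hProd (c + 1) * q' =
      S.hProd c * S.vProd (S.s (S.r - k)) * w := by
    rw [hsucc]
    linear_combination (-S.hProd c) * hq' + S.hProd c * hw
  rw [hsplit]
  exact Ideal.mul_mem_right _ _
    (S.hProd_mul_vProd_mem_span hk.le (Nat.lt_succ_iff.mp (Finset.mem_Ioc.mp hck).1) le_rfl)

theorem exists_vanishesBeyond {f : R} (hf : f ∈ S.ferrersIdeal) {c : ℕ} (hc : c ≤ S.t S.r) :
    ∃ q, S.VanishesBeyond c q ∧ f - S.hProd c * q ∈ Ideal.span (Set.range S.stairGens) := by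
  induction c with
  | zero => exact ⟨f, S.mem_ferrersIdeal_iff.mp hf, by simp [hProd]⟩
  | succ c ih =>
    obtain ⟨q, hq, hfq⟩ := ih (by omega)
    obtain ⟨q', hq', hqq'⟩ := S.exists_vanishesBeyond_succ (by omega) hq
    exact ⟨q', hq', by simpa using add_mem hfq hqq'⟩

theorem ferrersIdeal_eq_span : S.ferrersIdeal = Ideal.span (Set.range S.stairGens) := by
  refine le_antisymm (fun f hf => ?_) (Ideal.span_le.mpr ?_)
  · obtain ⟨q, -, hfq⟩ := S.exists_vanishesBeyond hf le_rfl
    have hlast : S.hProd (S.t S.r) * q ∈ Ideal.span (Set.range S.stairGens) := by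
      have h := Ideal.mul_mem_right q _ (S.hProd_mul_vProd_mem_span le_rfl le_rfl le_rfl)
      rwa [Nat.sub_self, S.hs0, vProd, Finset.Icc_eq_empty (by omega), Finset.prod_empty,
        mul_one] at h
    simpa using add_mem hfq hlast
  · rintro _ ⟨k, rfl⟩
    exact S.stairGen_mem_ferrersIdeal k.is_le

end Staircase

def bideg : Fin 4 → ℕ × ℕ := ![(1, 0), (1, 0), (0, 1), (0, 1)]

theorem weight_bideg (m : Fin 4 →₀ ℕ) :
    Finsupp.weight bideg m =
      (Finsupp.weight ![1, 1, 0, 0] m, Finsupp.weight ![0, 0, 1, 1] m) := by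
  ext <;> simp [Finsupp.weight_apply, Finsupp.sum_fintype, Fin.sum_univ_four, bideg]

theorem Bihom.isHomogeneousElem {f : R} (hf : Bihom f) :
    SetLike.IsHomogeneousElem (weightedHomogeneousSubmodule ℂ bideg) f := by
  obtain ⟨a, b, ha, hb⟩ := hf
  exact ⟨(a, b), fun m hm => by rw [weight_bideg, ha hm, hb hm]⟩

theorem Hf_isWeightedHomogeneous (a : ℂ × ℂ) : IsWeightedHomogeneous bideg (Hf a) (1, 0) :=
  ((isWeightedHomogeneous_C _ _).mul (isWeightedHomogeneous_X ℂ bideg 0)).sub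
    ((isWeightedHomogeneous_C _ _).mul (isWeightedHomogeneous_X ℂ bideg 1))

theorem Vf_isWeightedHomogeneous (b : ℂ × ℂ) : IsWeightedHomogeneous bideg (Vf b) (0, 1) :=
  ((isWeightedHomogeneous_C _ _).mul (isWeightedHomogeneous_X ℂ bideg 2)).sub
    ((isWeightedHomogeneous_C _ _).mul (isWeightedHomogeneous_X ℂ bideg 3))

theorem eq_C_of_isWeightedHomogeneous_bideg_zero {p : R} (hp : IsWeightedHomogeneous bideg p 0) :
    p = C (coeff 0 p) := by
  conv_lhs => rw [← hp.weightedHomogeneousComponent_same,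
    weightedHomogeneousComponent_zero _ (by decide)]

theorem isUnit_of_mem_bideg_zero {a : R} (ha : a ∈ weightedHomogeneousSubmodule ℂ bideg 0)
    (ha0 : a ≠ 0) : IsUnit a := by
  rw [mem_weightedHomogeneousSubmodule] at ha
  rw [eq_C_of_isWeightedHomogeneous_bideg_zero ha] at ha0 ⊢
  exact (Ne.isUnit fun h => ha0 (by rw [h, C_0])).map C

namespace Staircase

variable (S : Staircase)

theorem stairGen_isWeightedHomogeneous (k : ℕ) :
    IsWeightedHomogeneous bideg (stairGen S k) (S.t k, S.s (S.r - k)) := by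
  have hH := IsWeightedHomogeneous.prod (Finset.Icc 1 (S.t k)) _ _
    fun i _ => Hf_isWeightedHomogeneous (S.A i)
  have hV := IsWeightedHomogeneous.prod (Finset.Icc 1 (S.s (S.r - k))) _ _
    fun j _ => Vf_isWeightedHomogeneous (S.B j)
  simpa [stairGen] using hH.mul hV

theorem stairGen_ne_zero {k : ℕ} (hk : k ≤ S.r) : stairGen S k ≠ 0 := by
  refine mul_ne_zero (Finset.prod_ne_zero_iff.mpr fun i hi => Hf_ne_zero (S.hA0 i ?_))
    (Finset.prod_ne_zero_iff.mpr fun j hj => Vf_ne_zero (S.hB0 j ?_))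
  · exact Finset.Icc_subset_Icc_right (S.t_strictMonoOn.monotoneOn
      (Set.mem_Iic.mpr hk) (Set.mem_Iic.mpr le_rfl) hk) hi
  · exact S.Icc_s_sub_subset k hj

theorem eq_of_bidegree_le {j k : Fin (S.r + 1)}
    (h : (S.t j, S.s (S.r - j)) ≤ (S.t k, S.s (S.r - k))) : j = k := by
  obtain ⟨ht, hs⟩ := Prod.mk_le_mk.mp h
  have hj := Nat.lt_succ_iff.mp j.is_lt
  have hk := Nat.lt_succ_iff.mp k.is_lt
  have hjk : (j : ℕ) ≤ k := (S.t_strictMonoOn.le_iff_le hj hk).mp ht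
  have hkj : S.r - (j : ℕ) ≤ S.r - k :=
    (S.s_strictMonoOn.le_iff_le (Nat.sub_le _ _) (Nat.sub_le _ _)).mp hs
  exact Fin.ext (by omega)

end Staircase

/-- Remark 2.8 (uniqueness of minimal generators): if G is any finite set of nonzero
bihomogeneous polynomials minimally generating the defining ideal I_X of the Ferrers
configuration X associated to the staircase data, then G has exactly r+1 elements and
there is a bijection σ : G → {0,…,r} with g = c_g · f_{σ(g)} for nonzero scalars c_g. -/
theorem statement13 (S : Staircase) (IX : Ideal R)
    (hIX : IX = ⨅ k ∈ Finset.range S.r, ⨅ i ∈ Finset.Ioc (S.t k) (S.t (k + 1)),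
      ⨅ j ∈ Finset.Icc 1 (S.s (S.r - k)), Ipt (S.A i, S.B j))
    (G : Finset R) (hG : ∀ g ∈ G, g ≠ 0 ∧ Bihom g) (hmin : MinGen G IX) :
    G.card = S.r + 1 ∧
      ∃ σ : {g // g ∈ G} ≃ Fin (S.r + 1),
        ∀ g : {g // g ∈ G}, ∃ c : ℂ, c ≠ 0 ∧ (g : R) = C c * stairGen S (σ g) := by
  let _ := weightedGradedAlgebra ℂ bideg
  have hspan : IX = Ideal.span (Set.range S.stairGens) := hIX.trans S.ferrersIdeal_eq_span
  obtain ⟨σ, hσ⟩ := exists_equiv_eq_mul_of_minimal_homogeneous_generators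
    (fun a ha => isUnit_of_mem_bideg_zero ha) S.stairGens (fun k => (S.t k, S.s (S.r - k)))
    (fun k => S.stairGen_isWeightedHomogeneous k) (fun k => S.stairGen_ne_zero k.is_le)
    (fun j k => S.eq_of_bidegree_le) G (fun g hg => ⟨(hG g hg).1, (hG g hg).2.isHomogeneousElem⟩)
    (hmin.1.trans hspan) (fun g hg => hspan ▸ hmin.2 g hg)
  refine ⟨by simpa using Fintype.card_congr σ, σ, fun g => ?_⟩
  obtain ⟨a, ha, -, hg⟩ := hσ g
  rw [eq_C_of_isWeightedHomogeneous_bideg_zero ha] at hg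
  exact ⟨coeff 0 a, fun h0 => (hG g g.2).1 (by simp [hg, h0]), hg⟩
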